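/- arXiv:2303.15022 — 3 statements merged into one kernel-verified Lean document; each statement's English description precedes it below -/
import Mathlib

section
/- Consider an AX for e, an agent α taking its turn at timestep t, and suppose that for every argument a ∈ X_α^{t−1}∖{e} the only path from a to e in Q_α^{t−1} is the single direct edge (a,e). Then a singleton contribution set C = {(a,e)} satisfies the conditions of the shallow behaviour with max = 1 iff it satisfies the conditions of the greedy behaviour; in this sense the shallow behaviour with max = 1 and the greedy behaviour are aligned. -/
/-! If every path to `e` in the private QBAF is a direct edge, then every edge points at `e`:
an edge `(x, y)` with `y ≠ e`, prolonged by a path from `y` to `e`, would be a longer path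
from `x`. So `e` is the only possible target, and `e` is not a con argument since
the exchange BAF is acyclic. Greedy eligibility of `(x, y)` then says exactly that `y = e`
and `(x, e)` is a support (arguing for) or attack (arguing against) of the agent not yet
exchanged, i.e. a shallow candidate. The tie-break (3) of the greedy behaviour is vacuous
because `(a, e)` is already a path of length one, and the maximal cardinality required of a
shallow contribution is automatic for `max = 1`. -/

universe u v

variable {U : Type u} {Ag : Type v}

/-- A bipolar argumentation framework (BAF): arguments `X`, attacks `Att`, supports `Supp`. -/
structure BAF (U : Type u) where
  X : Finset U
  Att : Finset (U × U)
  Supp : Finset (U × U)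

namespace BAF

variable [DecidableEq U]

/-- The edges of a BAF: attacks together with supports. -/
def edges (B : BAF U) : Finset (U × U) := B.Att ∪ B.Supp

/-- A path from `a` to `b`: a nonempty list of consecutive edges `(c₀,c₁),…,(c_{n−1},cₙ)`
with `c₀ = a` and `cₙ = b`. -/
inductive IsPath (B : BAF U) : U → U → List (U × U) → Prop
  | single {a b : U} (h : (a, b) ∈ B.edges) : IsPath B a b [(a, b)]
  | cons {a c b : U} {p : List (U × U)} (h : (a, c) ∈ B.edges)
      (hp : IsPath B c b p) : IsPath B a b ((a, c) :: p)

/-- `B ⊑ B'` for BAFs (componentwise inclusion). -/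
def Sub (B B' : BAF U) : Prop := B.X ⊆ B'.X ∧ B.Att ⊆ B'.Att ∧ B.Supp ⊆ B'.Supp

/-- `B` is a BAF for the explanandum `e`. -/
structure IsFor (B : BAF U) (e : U) : Prop where
  e_mem : e ∈ B.X
  att_mem : ∀ p ∈ B.Att, p.1 ∈ B.X ∧ p.2 ∈ B.X
  supp_mem : ∀ p ∈ B.Supp, p.1 ∈ B.X ∧ p.2 ∈ B.X
  disj : ∀ p : U × U, ¬(p ∈ B.Att ∧ p ∈ B.Supp)
  no_out : ∀ a : U, (e, a) ∉ B.edges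
  reach : ∀ a ∈ B.X, a ≠ e → ∃ p, B.IsPath a e p
  acyclic : ∀ (a : U) (p : List (U × U)), ¬ B.IsPath a a p

/-- The number of attack edges occurring in a path. -/
def attCount (B : BAF U) (p : List (U × U)) : ℕ :=
  (p.filter (fun q => q ∈ B.Att)).length

/-- Pro arguments: arguments with a path to `e` containing an even number of attacks. -/
def pro (B : BAF U) (e : U) : Set U :=
  {a | a ∈ B.X ∧ ∃ p, B.IsPath a e p ∧ Even (B.attCount p)}

/-- Con arguments: arguments with a path to `e` containing an odd number of attacks. -/
def con (B : BAF U) (e : U) : Set U :=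
  {a | a ∈ B.X ∧ ∃ p, B.IsPath a e p ∧ Odd (B.attCount p)}

/-- The shortest path from `x` to `e` is strictly shorter than every path from `y` to `e`. -/
def SPlt (B : BAF U) (e x y : U) : Prop :=
  ∃ p, B.IsPath x e p ∧ ∀ q, B.IsPath y e q → p.length < q.length

end BAF

/-- A quantitative bipolar argumentation framework (QBAF), with base scores `bs`. -/
structure QBAF (U : Type u) where
  X : Finset U
  Att : Finset (U × U)
  Supp : Finset (U × U)
  bs : U → ℝ

namespace QBAF

variable [DecidableEq U]

def toBAF (Q : QBAF U) : BAF U := ⟨Q.X, Q.Att, Q.Supp⟩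

def edges (Q : QBAF U) : Finset (U × U) := Q.Att ∪ Q.Supp

/-- `Q` is a QBAF for `e`: its underlying BAF is for `e` and base scores lie in `[0,1]`. -/
def IsFor (Q : QBAF U) (e : U) : Prop :=
  Q.toBAF.IsFor e ∧ ∀ a ∈ Q.X, Q.bs a ∈ Set.Icc (0 : ℝ) 1

/-- `Q ⊑ Q'` for QBAFs. -/
def Sub (Q Q' : QBAF U) : Prop :=
  Q.X ⊆ Q'.X ∧ Q.Att ⊆ Q'.Att ∧ Q.Supp ⊆ Q'.Supp ∧ ∀ a ∈ Q.X, Q'.bs a = Q.bs a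

def attackers (Q : QBAF U) (a : U) : Finset U :=
  (Q.Att.filter (fun p => p.2 = a)).image Prod.fst

def supporters (Q : QBAF U) (a : U) : Finset U :=
  (Q.Supp.filter (fun p => p.2 = a)).image Prod.fst

end QBAF

/-- The DF-QuAD aggregation function on finite lists of values. -/
noncomputable def dfAgg : List ℝ → ℝ
  | [] => 0
  | v :: vs => v + dfAgg vs - v * dfAgg vs

/-- The DF-QuAD combination function. -/
noncomputable def dfComb (v0 vm vp : ℝ) : ℝ :=
  if vp ≤ vm then v0 - v0 * |vp - vm| else v0 + (1 - v0) * |vp - vm|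

/-- `f` is the DF-QuAD evaluation of the QBAF `Q`. -/
def IsDFQuADEval [DecidableEq U] (Q : QBAF U) (f : U → ℝ) : Prop :=
  ∀ a ∈ Q.X,
    f a = dfComb (Q.bs a) (dfAgg ((Q.attackers a).toList.map f))
        (dfAgg ((Q.supporters a).toList.map f))

/-- The stance determined by an evaluation value in `[0,1]`:
`−` (coded `-1`) on `[0,0.5)`, `0` on `{0.5}`, `+` (coded `1`) on `(0.5,1]`. -/
noncomputable def stanceVal (v : ℝ) : ℤ :=
  if v < 1 / 2 then -1 else if v = 1 / 2 then 0 else 1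

/-- An argumentative exchange (AX): exchange BAFs `B`, private QBAFs `Q`,
and a contributor mapping `contrib`. -/
structure AX (U : Type u) (Ag : Type v) where
  n : ℕ
  B : ℕ → BAF U
  Q : Ag → ℕ → QBAF U
  contrib : U × U → Ag × ℕ

namespace AX

variable [DecidableEq U]

/-- `E` is an AX for the explanandum `e` amongst the agents `Ag`. -/
structure IsAX (E : AX U Ag) (e : U) : Prop where
  n_pos : 0 < E.n
  agents : ∃ α β : Ag, α ≠ β
  B_for : ∀ t ≤ E.n, (E.B t).IsFor e
  B0_X : (E.B 0).X = {e}
  B0_Att : (E.B 0).Att = ∅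
  B0_Supp : (E.B 0).Supp = ∅
  B_mono : ∀ t < E.n, (E.B t).Sub (E.B (t + 1))
  Q_for : ∀ (α : Ag), ∀ t ≤ E.n, (E.Q α t).IsFor e
  Q_mono : ∀ (α : Ag), ∀ t < E.n, (E.Q α t).Sub (E.Q α (t + 1))
  Q_diff_X : ∀ (α : Ag), ∀ t < E.n,
    (E.Q α (t + 1)).X \ (E.Q α t).X ⊆ (E.B (t + 1)).X \ (E.B t).X
  Q_diff_Att : ∀ (α : Ag), ∀ t < E.n,
    (E.Q α (t + 1)).Att \ (E.Q α t).Att ⊆ (E.B (t + 1)).Att \ (E.B t).Att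
  Q_diff_Supp : ∀ (α : Ag), ∀ t < E.n,
    (E.Q α (t + 1)).Supp \ (E.Q α t).Supp ⊆ (E.B (t + 1)).Supp \ (E.B t).Supp
  learn_X : ∀ (α : Ag), ∀ t < E.n,
    (E.B (t + 1)).X \ (E.B t).X ⊆ (E.Q α (t + 1)).X
  learn_Att : ∀ (α : Ag), ∀ t < E.n,
    (E.B (t + 1)).Att \ (E.B t).Att ⊆ (E.Q α (t + 1)).Att
  learn_Supp : ∀ (α : Ag), ∀ t < E.n,
    (E.B (t + 1)).Supp \ (E.B t).Supp ⊆ (E.Q α (t + 1)).Supp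
  contrib_pos : ∀ p ∈ (E.B E.n).edges, 0 < (E.contrib p).2
  contrib_le : ∀ p ∈ (E.B E.n).edges, (E.contrib p).2 ≤ E.n
  contrib_mem : ∀ p ∈ (E.B E.n).edges, p ∈ (E.B (E.contrib p).2).edges
  contrib_new : ∀ p ∈ (E.B E.n).edges, p ∉ (E.B ((E.contrib p).2 - 1)).edges

/-- The set of edges contributed by agent `α` at timestep `t`. -/
def Cset [DecidableEq Ag] (E : AX U Ag) (α : Ag) (t : ℕ) : Finset (U × U) :=
  (E.B E.n).edges.filter (fun p => E.contrib p = (α, t))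

end AX

/-- All agents hold the same stance at timestep `t`. -/
def ResolvedAt (st : Ag → ℕ → ℤ) (t : ℕ) : Prop := ∀ α β : Ag, st α t = st β t

/-- The AX (with an initial conflict) is resolved. -/
def Resolved (E : AX U Ag) (st : Ag → ℕ → ℤ) : Prop :=
  ¬ ResolvedAt st 0 ∧ ResolvedAt st E.n ∧ ∀ t, 0 < t → t < E.n → ¬ ResolvedAt st t

/-- The AX (with an initial conflict) is unresolved. -/
def Unresolved (E : AX U Ag) (st : Ag → ℕ → ℤ) : Prop :=
  ¬ ResolvedAt st 0 ∧ ∀ t, 0 < t → t ≤ E.n → ¬ ResolvedAt st t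

/-- Agent `α` is arguing for `e` at `t`: some agent has a strictly smaller stance. -/
def ArguingFor (st : Ag → ℕ → ℤ) (α : Ag) (t : ℕ) : Prop := ∃ β, st β t < st α t

/-- Agent `α` is arguing against `e` at `t`: some agent has a strictly greater stance. -/
def ArguingAgainst (st : Ag → ℕ → ℤ) (α : Ag) (t : ℕ) : Prop := ∃ β, st α t < st β t

section Behaviours

variable [DecidableEq U]

/-- Condition (1) of the greedy behaviour: `(a,b)` is a pair of the private QBAF `Qp`
not yet in the exchange BAF `Bp`, in line with the agent's state (`forE`). -/
def GreedyEligible (Qp : QBAF U) (Bp : BAF U) (e : U) (forE : Bool) (a b : U) : Prop :=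
  (a, b) ∈ Qp.edges ∧ (a, b) ∉ Bp.edges ∧
    (if forE then
        ((a, b) ∈ Qp.Supp ∧ (b ∈ Bp.pro e ∨ b = e)) ∨ ((a, b) ∈ Qp.Att ∧ b ∈ Bp.con e)
      else
        ((a, b) ∈ Qp.Supp ∧ b ∈ Bp.con e) ∨ ((a, b) ∈ Qp.Att ∧ (b ∈ Bp.pro e ∨ b = e)))

/-- A greedy choice: eligible, of maximal strength (2), and closest to `e` among
equally strong eligible pairs (3). -/
def GreedyChoice (Qp : QBAF U) (Bp : BAF U) (σα : U → ℝ) (e : U) (forE : Bool)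
    (a b : U) : Prop :=
  GreedyEligible Qp Bp e forE a b ∧
    (∀ a' b' : U, GreedyEligible Qp Bp e forE a' b' → σα a' ≤ σα a) ∧
    (∀ a'' b'' : U, GreedyEligible Qp Bp e forE a'' b'' → σα a'' = σα a →
      ¬ BAF.SPlt Qp.toBAF e a'' a)

/-- A contribution set is a correct greedy contribution: empty or a single greedy choice. -/
def GreedyOK (Qp : QBAF U) (Bp : BAF U) (σα : U → ℝ) (e : U) (forE : Bool)
    (C : Finset (U × U)) : Prop :=
  C = ∅ ∨ ∃ a b : U, C = {(a, b)} ∧ GreedyChoice Qp Bp σα e forE a b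

/-- Agent `α` exhibits greedy behaviour throughout the AX `E`. -/
def GreedyBehaviour [DecidableEq Ag] (E : AX U Ag) (e : U)
    (ev : Ag → QBAF U → U → ℝ) (st : Ag → ℕ → ℤ) (α : Ag) : Prop :=
  ∀ t, 0 < t → t ≤ E.n →
    E.Cset α t = ∅ ∨
      ∃ a b : U, E.Cset α t = {(a, b)} ∧
        (ArguingFor st α (t - 1) →
          GreedyChoice (E.Q α (t - 1)) (E.B (t - 1)) (ev α (E.Q α (t - 1))) e true a b) ∧
        (ArguingAgainst st α (t - 1) →
          GreedyChoice (E.Q α (t - 1)) (E.B (t - 1)) (ev α (E.Q α (t - 1))) e false a b)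

/-- The inner condition of the shallow behaviour for a contribution set `C`. -/
def ShallowInner (Qp : QBAF U) (Bp : BAF U) (σα : U → ℝ) (e : U) (forE : Bool)
    (C : Finset (U × U)) (max : ℕ) : Prop :=
  C.card ≤ max ∧ (∀ p ∈ C, p.2 = e) ∧
    (if forE then
        C ⊆ Qp.Supp \ Bp.Supp ∧
          ∀ p ∈ C, ∀ b : U, (b, e) ∈ Qp.Supp → (b, e) ∉ Bp.Supp ∪ C → σα b ≤ σα p.1
      else
        C ⊆ Qp.Att \ Bp.Att ∧
          ∀ p ∈ C, ∀ b : U, (b, e) ∈ Qp.Att → (b, e) ∉ Bp.Att ∪ C → σα b ≤ σα p.1)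

/-- A contribution set is a correct shallow contribution: it satisfies the inner condition
and is of maximal cardinality doing so. -/
def ShallowOK (Qp : QBAF U) (Bp : BAF U) (σα : U → ℝ) (e : U) (forE : Bool)
    (C : Finset (U × U)) (max : ℕ) : Prop :=
  ShallowInner Qp Bp σα e forE C max ∧
    ∀ C' : Finset (U × U), ShallowInner Qp Bp σα e forE C' max → C'.card ≤ C.card

/-- A private view of the exchange BAF `Bp` by an agent with private QBAF `Qα`. -/
def PrivateView (Bp : BAF U) (Qα : QBAF U) (V : QBAF U) : Prop :=
  Bp.Sub V.toBAF ∧ V.Sub Qα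

/-- `ε` is the perceived effect on `e` of the pair `(a,b)` for an agent with private QBAF
`Qp` given the exchange BAF `Bp` (under the DF-QuAD evaluation). -/
def PerceivedEffect (Qp : QBAF U) (Bp : BAF U) (e a b : U) (ε : ℝ) : Prop :=
  ∃ (V V' : QBAF U) (f f' : U → ℝ),
    PrivateView Bp Qp V ∧
    V'.X = insert a V.X ∧
    V'.Att = (V'.X ×ˢ V'.X) ∩ Qp.Att ∧
    V'.Supp = (V'.X ×ˢ V'.X) ∩ Qp.Supp ∧
    (∀ x ∈ V'.X, V'.bs x = Qp.bs x) ∧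
    IsDFQuADEval V f ∧ IsDFQuADEval V' f' ∧
    ε = f' e - f e

/-- A pair eligible for the counterfactual behaviour. -/
def CFEligible (Qp : QBAF U) (Bp : BAF U) (a b : U) : Prop :=
  (a, b) ∈ Qp.edges ∧ (a, b) ∉ Bp.edges ∧ a ∈ Qp.X ∧ a ∉ Bp.X ∧ b ∈ Bp.X

/-- Agent `α` exhibits counterfactual behaviour throughout the AX `E`,
where `εf α t a b` is the perceived effect of `(a,b)` at timestep `t`. -/
def CFBehaviour [DecidableEq Ag] (E : AX U Ag) (st : Ag → ℕ → ℤ)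
    (εf : Ag → ℕ → U → U → ℝ) (α : Ag) : Prop :=
  ∀ t, 0 < t → t ≤ E.n →
    E.Cset α t = ∅ ∨
      ∃ a b : U, E.Cset α t = {(a, b)} ∧
        CFEligible (E.Q α (t - 1)) (E.B (t - 1)) a b ∧
        (ArguingFor st α (t - 1) →
          0 < εf α t a b ∧
            ∀ a' b' : U, CFEligible (E.Q α (t - 1)) (E.B (t - 1)) a' b' →
              εf α t a' b' ≤ εf α t a b) ∧
        (ArguingAgainst st α (t - 1) →
          εf α t a b < 0 ∧
            ∀ a' b' : U, CFEligible (E.Q α (t - 1)) (E.B (t - 1)) a' b' →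
              εf α t a b ≤ εf α t a' b')

end Behaviours

namespace BAF

variable [DecidableEq U] {B : BAF U} {e : U}

theorem IsPath.ne_nil {a b : U} {p : List (U × U)} (h : B.IsPath a b p) : p ≠ [] := by
  cases h <;> simp

theorem IsFor.not_mem_con (hB : B.IsFor e) : e ∉ B.con e :=
  fun ⟨_, p, hp, _⟩ => hB.acyclic e p hp

theorem IsFor.snd_eq_of_mem_edges (hB : B.IsFor e)
    (hpath : ∀ x ∈ B.X, x ≠ e → ∀ p, B.IsPath x e p → p = [(x, e)])
    {x y : U} (hxy : (x, y) ∈ B.edges) : y = e := by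
  by_contra hye
  have hxe : x ≠ e := by rintro rfl; exact hB.no_out y hxy
  have hmem : x ∈ B.X ∧ y ∈ B.X := by
    rcases Finset.mem_union.1 hxy with h | h
    · exact hB.att_mem _ h
    · exact hB.supp_mem _ h
  obtain ⟨q, hq⟩ := hB.reach y hmem.2 hye
  have hdirect := hpath x hmem.1 hxe _ (IsPath.cons hxy hq)
  exact hq.ne_nil (List.cons.inj hdirect).2

theorem not_sPlt_of_mem_edges {x a : U} (hae : (a, e) ∈ B.edges) : ¬ B.SPlt e x a := by
  rintro ⟨p, hp, hlt⟩
  have hp_pos : 0 < p.length := List.length_pos_iff.2 hp.ne_nil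
  have := hlt [(a, e)] (IsPath.single hae)
  simp only [List.length_singleton] at this
  omega

/-- The edges by which an agent arguing for (`true`) or against (`false`) `e` contributes
directly to `e` under the shallow behaviour. -/
def sideRel (B : BAF U) (forE : Bool) : Finset (U × U) :=
  if forE then B.Supp else B.Att

theorem sideRel_subset_edges {forE : Bool} : B.sideRel forE ⊆ B.edges := by
  cases forE
  exacts [Finset.subset_union_left, Finset.subset_union_right]

end BAF

section Alignment

variable [DecidableEq U] {Qp : QBAF U} {Bp : BAF U} {σα : U → ℝ} {e : U} {forE : Bool}

theorem shallowOK_singleton_iff {a : U} :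
    ShallowOK Qp Bp σα e forE {(a, e)} 1 ↔
      (a, e) ∈ Qp.toBAF.sideRel forE \ Bp.sideRel forE ∧
        ∀ b, (b, e) ∈ Qp.toBAF.sideRel forE → (b, e) ∉ Bp.sideRel forE → σα b ≤ σα a := by
  have hmax : ∀ C', ShallowInner Qp Bp σα e forE C' 1 → C'.card ≤ ({(a, e)} : Finset _).card :=
    fun C' hC' => hC'.1.trans (Finset.card_singleton _).ge
  rw [ShallowOK, and_iff_left hmax]
  cases forE <;>
    simp only [ShallowInner, BAF.sideRel, QBAF.toBAF, Finset.card_singleton, Finset.mem_singleton,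
      forall_eq, Bool.false_eq_true, ↓reduceIte, Finset.singleton_subset_iff, Finset.mem_sdiff,
      Finset.union_singleton, Finset.mem_insert, Prod.mk.injEq, and_true, not_or, and_imp,
      true_and, le_refl, and_congr_right_iff] <;>
  · refine fun _ _ => ⟨fun h b hb hbB => ?_, fun h b hb _ => h b hb⟩
    rcases eq_or_ne b a with rfl | hba
    exacts [le_rfl, h b hb hba hbB]

theorem greedyOK_singleton_iff {a b : U} :
    GreedyOK Qp Bp σα e forE {(a, b)} ↔ GreedyChoice Qp Bp σα e forE a b := by
  simp [GreedyOK, Finset.singleton_ne_empty]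

theorem greedyEligible_iff_of_star (hQ : Qp.toBAF.IsFor e) (hB : Bp.IsFor e)
    (hsub : Bp.Sub Qp.toBAF) (hstar : ∀ x y, (x, y) ∈ Qp.edges → y = e) {x y : U} :
    GreedyEligible Qp Bp e forE x y ↔
      y = e ∧ (x, e) ∈ Qp.toBAF.sideRel forE \ Bp.sideRel forE := by
  by_cases hy : y = e
  · subst hy
    have hAS : (x, y) ∈ Bp.Att → (x, y) ∉ Qp.Supp := fun hA hS => hQ.disj _ ⟨hsub.2.1 hA, hS⟩
    have hSA : (x, y) ∈ Bp.Supp → (x, y) ∉ Qp.Att := fun hS hA => hQ.disj _ ⟨hA, hsub.2.2 hS⟩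
    cases forE <;>
      simp only [GreedyEligible, BAF.sideRel, QBAF.toBAF, BAF.edges, QBAF.edges, hB.not_mem_con,
        Finset.mem_union, Finset.mem_sdiff, Bool.false_eq_true, ↓reduceIte, and_false, or_true,
        or_false, false_or] <;>
      tauto
  · exact iff_of_false (fun h => hy (hstar x y h.1)) (fun h => hy h.1)

theorem greedyChoice_iff_of_star (hQ : Qp.toBAF.IsFor e) (hB : Bp.IsFor e)
    (hsub : Bp.Sub Qp.toBAF) (hstar : ∀ x y, (x, y) ∈ Qp.edges → y = e) {a : U} :
    GreedyChoice Qp Bp σα e forE a e ↔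
      (a, e) ∈ Qp.toBAF.sideRel forE \ Bp.sideRel forE ∧
        ∀ b, (b, e) ∈ Qp.toBAF.sideRel forE → (b, e) ∉ Bp.sideRel forE → σα b ≤ σα a := by
  simp only [GreedyChoice, greedyEligible_iff_of_star hQ hB hsub hstar, true_and]
  refine ⟨fun ⟨ha, hmax, _⟩ => ⟨ha, fun b hb hbB => hmax b e ⟨rfl, Finset.mem_sdiff.2 ⟨hb, hbB⟩⟩⟩,
    fun ⟨ha, hmax⟩ => ⟨ha, ?_, fun _ _ _ _ => ?_⟩⟩
  · rintro b _ ⟨rfl, hb⟩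
    exact hmax b (Finset.mem_sdiff.1 hb).1 (Finset.mem_sdiff.1 hb).2
  · exact BAF.not_sPlt_of_mem_edges (BAF.sideRel_subset_edges (Finset.mem_sdiff.1 ha).1)

end Alignment

/-- alignment of the shallow behaviour with `max = 1` and the greedy
behaviour when all paths to `e` are direct edges. -/
theorem statement9 {U : Type u} [DecidableEq U] (e : U) (Qp : QBAF U) (Bp : BAF U)
    (hQ : Qp.IsFor e) (hB : Bp.IsFor e) (hsub : Bp.Sub Qp.toBAF)
    (σα : U → ℝ) (forE : Bool)
    (hpath : ∀ x ∈ Qp.X, x ≠ e → ∀ p, Qp.toBAF.IsPath x e p ↔ p = [(x, e)]) :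
    ∀ a : U,
      ShallowOK Qp Bp σα e forE {(a, e)} 1 ↔ GreedyOK Qp Bp σα e forE {(a, e)} := by
  intro a
  have hstar : ∀ x y, (x, y) ∈ Qp.edges → y = e := fun _ _ =>
    hQ.1.snd_eq_of_mem_edges fun x hx hxe p => (hpath x hx hxe p).1
  rw [shallowOK_singleton_iff, greedyOK_singleton_iff,
    greedyChoice_iff_of_star hQ.1 hB hsub hstar]
end

section
/- Let Q = ⟨X,A,S,τ⟩ ⊑ Q' = ⟨X',A',S',τ'⟩ be QBAFs for an explanandum e with X' = X ∪ {a} for some a ∉ X, and suppose every edge in (A'∪S')∖(A∪S) has a as an endpoint. Under the DF-QuAD evaluation σ: if σ(Q',e) > σ(Q,e) then a ∈ pro(⟨X',A',S'⟩), and if σ(Q',e) < σ(Q,e) then a ∈ con(⟨X',A',S'⟩). -/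
universe u v

variable {U : Type u} {Ag : Type v}

/-!
Adding `a` can only affect arguments that `a` reaches. By induction along the acyclic graph,
if `a` has no path with an odd number of attacks to an old argument `x`, then `x` gains no
attacker, its old attackers (reached by `a` only evenly, if at all) lose strength, and its
supporters only gain in number and strength; DF-QuAD is monotone in all of these, so the
strength of `x` does not decrease. Dually, without an even path it does not increase.
Applied at `e`, a strict change of the strength of `e` forces a path of the matching parity.
-/

namespace BAF

variable [DecidableEq U] {B : BAF U} {e a b c x y : U} {p q : List (U × U)}

def HasEvenPath (B : BAF U) (a x : U) : Prop := ∃ p, B.IsPath a x p ∧ Even (B.attCount p)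

def HasOddPath (B : BAF U) (a x : U) : Prop := ∃ p, B.IsPath a x p ∧ Odd (B.attCount p)

theorem IsPath.append (hp : B.IsPath a b p) (hq : B.IsPath b c q) : B.IsPath a c (p ++ q) := by
  induction hp with
  | single h => exact .cons h hq
  | cons h _ ih => exact .cons h (ih hq)

theorem attCount_append : B.attCount (p ++ q) = B.attCount p + B.attCount q := by
  simp [attCount, List.filter_append]

theorem attCount_singleton_of_mem (h : (x, y) ∈ B.Att) : B.attCount [(x, y)] = 1 := by
  simp [attCount, h]

theorem attCount_singleton_of_notMem (h : (x, y) ∉ B.Att) : B.attCount [(x, y)] = 0 := by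
  simp [attCount, h]

theorem hasOddPath_of_mem_att (h : (a, x) ∈ B.Att) : B.HasOddPath a x :=
  ⟨_, .single (Finset.mem_union_left _ h), by rw [attCount_singleton_of_mem h]; exact odd_one⟩

theorem hasEvenPath_of_mem_supp (h : (a, x) ∈ B.Supp) (hna : (a, x) ∉ B.Att) :
    B.HasEvenPath a x :=
  ⟨_, .single (Finset.mem_union_right _ h), by rw [attCount_singleton_of_notMem hna]; exact .zero⟩

theorem HasEvenPath.trans_att (h : B.HasEvenPath a y) (hyx : (y, x) ∈ B.Att) :
    B.HasOddPath a x := by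
  obtain ⟨p, hp, hev⟩ := h
  refine ⟨_, hp.append (.single (Finset.mem_union_left _ hyx)), ?_⟩
  rw [attCount_append, attCount_singleton_of_mem hyx]
  exact hev.add_one

theorem HasOddPath.trans_att (h : B.HasOddPath a y) (hyx : (y, x) ∈ B.Att) :
    B.HasEvenPath a x := by
  obtain ⟨p, hp, hodd⟩ := h
  refine ⟨_, hp.append (.single (Finset.mem_union_left _ hyx)), ?_⟩
  rw [attCount_append, attCount_singleton_of_mem hyx]
  exact hodd.add_one

theorem HasEvenPath.trans_supp (h : B.HasEvenPath a y) (hyx : (y, x) ∈ B.Supp)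
    (hna : (y, x) ∉ B.Att) : B.HasEvenPath a x := by
  obtain ⟨p, hp, hev⟩ := h
  refine ⟨_, hp.append (.single (Finset.mem_union_right _ hyx)), ?_⟩
  rwa [attCount_append, attCount_singleton_of_notMem hna]

theorem HasOddPath.trans_supp (h : B.HasOddPath a y) (hyx : (y, x) ∈ B.Supp)
    (hna : (y, x) ∉ B.Att) : B.HasOddPath a x := by
  obtain ⟨p, hp, hodd⟩ := h
  refine ⟨_, hp.append (.single (Finset.mem_union_right _ hyx)), ?_⟩
  rwa [attCount_append, attCount_singleton_of_notMem hna]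

theorem IsFor.mem_X_of_mem_edges (hB : B.IsFor e) (h : (x, y) ∈ B.edges) :
    x ∈ B.X ∧ y ∈ B.X :=
  (Finset.mem_union.mp h).elim (hB.att_mem _) (hB.supp_mem _)

/-- "Has a path to" is a strict order on the finite set of arguments. -/
theorem IsFor.induction (hB : B.IsFor e) {P : U → Prop}
    (step : ∀ x ∈ B.X, (∀ y, (y, x) ∈ B.edges → P y) → P x) (hx : x ∈ B.X) : P x := by
  let reaches : U → U → Prop := fun y x => ∃ p, B.IsPath y x p
  have : IsStrictOrder U reaches :=
    { irrefl := fun a ⟨p, hp⟩ => hB.acyclic a p hp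
      trans := fun _ _ _ ⟨p, hp⟩ ⟨q, hq⟩ => ⟨_, hp.append hq⟩ }
  refine (B.X.finite_toSet.wellFoundedOn (r := reaches)).induction hx fun x hx ih => ?_
  exact step x hx fun y hy => ih y (hB.mem_X_of_mem_edges hy).1 ⟨_, .single hy⟩

end BAF

namespace QBAF

variable [DecidableEq U] {Q Q' : QBAF U} {e a b x : U}

@[simp]
theorem mem_attackers : b ∈ Q.attackers x ↔ (b, x) ∈ Q.Att := by
  simp [attackers]

@[simp]
theorem mem_supporters : b ∈ Q.supporters x ↔ (b, x) ∈ Q.Supp := by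
  simp [supporters]

theorem IsFor.mem_X_of_mem_attackers (hQ : Q.IsFor e) (hb : b ∈ Q.attackers x) : b ∈ Q.X :=
  (hQ.1.att_mem _ (mem_attackers.mp hb)).1

theorem IsFor.mem_X_of_mem_supporters (hQ : Q.IsFor e) (hb : b ∈ Q.supporters x) : b ∈ Q.X :=
  (hQ.1.supp_mem _ (mem_supporters.mp hb)).1

theorem Sub.attackers_subset (h : Q.Sub Q') : Q.attackers x ⊆ Q'.attackers x :=
  fun _ hb => mem_attackers.mpr (h.2.1 (mem_attackers.mp hb))

theorem Sub.supporters_subset (h : Q.Sub Q') : Q.supporters x ⊆ Q'.supporters x :=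
  fun _ hb => mem_supporters.mpr (h.2.2.1 (mem_supporters.mp hb))

theorem attackers_subset_of_not_hasOddPath (hsub : Q.Sub Q')
    (hdisj : ∀ p, ¬(p ∈ Q'.Att ∧ p ∈ Q'.Supp))
    (hedge : ∀ p ∈ Q'.edges, p ∉ Q.edges → p.1 = a ∨ p.2 = a) (hxa : x ≠ a)
    (hodd : ¬ Q'.toBAF.HasOddPath a x) : Q'.attackers x ⊆ Q.attackers x := by
  intro b hb
  rw [mem_attackers] at hb ⊢
  by_contra hbx
  have hold : (b, x) ∉ Q.edges := by
    simp only [edges, Finset.mem_union, not_or]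
    exact ⟨hbx, fun h => hdisj _ ⟨hb, hsub.2.2.1 h⟩⟩
  rcases hedge _ (Finset.mem_union_left _ hb) hold with rfl | rfl
  · exact hodd (BAF.hasOddPath_of_mem_att hb)
  · exact hxa rfl

theorem supporters_subset_of_not_hasEvenPath (hsub : Q.Sub Q')
    (hdisj : ∀ p, ¬(p ∈ Q'.Att ∧ p ∈ Q'.Supp))
    (hedge : ∀ p ∈ Q'.edges, p ∉ Q.edges → p.1 = a ∨ p.2 = a) (hxa : x ≠ a)
    (heven : ¬ Q'.toBAF.HasEvenPath a x) : Q'.supporters x ⊆ Q.supporters x := by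
  intro b hb
  rw [mem_supporters] at hb ⊢
  by_contra hbx
  have hna : (b, x) ∉ Q'.Att := fun h => hdisj _ ⟨h, hb⟩
  have hold : (b, x) ∉ Q.edges := by
    simp only [edges, Finset.mem_union, not_or]
    exact ⟨fun h => hna (hsub.2.1 h), hbx⟩
  rcases hedge _ (Finset.mem_union_right _ hb) hold with rfl | rfl
  · exact heven (BAF.hasEvenPath_of_mem_supp hb hna)
  · exact hxa rfl

end QBAF

open Set

section DFQuAD

theorem dfAgg_eq_one_sub_prod (l : List ℝ) : dfAgg l = 1 - (l.map (1 - ·)).prod := by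
  induction l with
  | nil => simp [dfAgg]
  | cons v vs ih => simp only [dfAgg, ih, List.map_cons, List.prod_cons]; ring

variable {ι : Type*}

theorem dfAgg_map_toList (s : Finset ι) (g : ι → ℝ) :
    dfAgg (s.toList.map g) = 1 - ∏ i ∈ s, (1 - g i) := by
  rw [dfAgg_eq_one_sub_prod, List.map_map]
  exact congrArg (1 - ·) (Finset.prod_map_toList s _)

theorem dfAgg_mem_Icc {s : Finset ι} {g : ι → ℝ} (hg : ∀ i ∈ s, g i ∈ Icc 0 1) :
    dfAgg (s.toList.map g) ∈ Icc 0 1 := by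
  rw [dfAgg_map_toList]
  have h0 : ∀ i ∈ s, 0 ≤ 1 - g i := fun i hi => sub_nonneg.mpr (hg i hi).2
  have h1 : ∀ i ∈ s, 1 - g i ≤ 1 := fun i hi => sub_le_self _ (hg i hi).1
  constructor
  · linarith [Finset.prod_le_one h0 h1]
  · linarith [Finset.prod_nonneg h0]

theorem dfAgg_mono {s s' : Finset ι} {g h : ι → ℝ} (hss' : s ⊆ s')
    (hh : ∀ i ∈ s', h i ∈ Icc 0 1) (hgh : ∀ i ∈ s, g i ≤ h i) :
    dfAgg (s.toList.map g) ≤ dfAgg (s'.toList.map h) := by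
  rw [dfAgg_map_toList, dfAgg_map_toList, sub_le_sub_iff_left]
  calc ∏ i ∈ s', (1 - h i)
      ≤ ∏ i ∈ s, (1 - h i) :=
        Finset.prod_le_prod_of_subset_of_le_one hss' (fun i hi => sub_nonneg.mpr (hh i hi).2)
          (fun i hi _ => sub_le_self _ (hh i hi).1)
    _ ≤ ∏ i ∈ s, (1 - g i) :=
        Finset.prod_le_prod (fun i hi => sub_nonneg.mpr (hh i (hss' hi)).2)
          (fun i hi => sub_le_sub_left (hgh i hi) 1)

theorem dfComb_mem_Icc {v0 vm vp : ℝ} (h0 : v0 ∈ Icc 0 1) (hm : vm ∈ Icc 0 1)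
    (hp : vp ∈ Icc 0 1) : dfComb v0 vm vp ∈ Icc 0 1 := by
  obtain ⟨h0, h1⟩ := h0
  obtain ⟨hm0, hm1⟩ := hm
  obtain ⟨hp0, hp1⟩ := hp
  unfold dfComb
  split_ifs
  · rw [abs_of_nonpos (by linarith)]
    constructor <;> nlinarith
  · rw [abs_of_pos (by linarith)]
    constructor <;> nlinarith

theorem dfComb_mono {v0 vm vp vm' vp' : ℝ} (h0 : v0 ∈ Icc 0 1) (hd : vp - vm ≤ vp' - vm') :
    dfComb v0 vm vp ≤ dfComb v0 vm' vp' := by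
  obtain ⟨h0, h1⟩ := h0
  unfold dfComb
  split_ifs
  · rw [abs_of_nonpos (by linarith), abs_of_nonpos (by linarith)]; nlinarith
  · rw [abs_of_nonpos (by linarith), abs_of_pos (by linarith)]; nlinarith
  · linarith
  · rw [abs_of_pos (by linarith), abs_of_pos (by linarith)]; nlinarith

theorem dfComb_dfAgg_mono {v0 : ℝ} (h0 : v0 ∈ Icc 0 1) {A A' S S' : Finset ι} {g g' : ι → ℝ}
    (hA : A' ⊆ A) (hS : S ⊆ S') (hg : ∀ i ∈ A, g i ∈ Icc 0 1) (hg' : ∀ i ∈ S', g' i ∈ Icc 0 1)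
    (hAg : ∀ i ∈ A', g' i ≤ g i) (hSg : ∀ i ∈ S, g i ≤ g' i) :
    dfComb v0 (dfAgg (A.toList.map g)) (dfAgg (S.toList.map g)) ≤
      dfComb v0 (dfAgg (A'.toList.map g')) (dfAgg (S'.toList.map g')) := by
  refine dfComb_mono h0 ?_
  linarith [dfAgg_mono hA hg hAg, dfAgg_mono hS hg' hSg]

end DFQuAD

namespace IsDFQuADEval

variable [DecidableEq U] {Q Q' : QBAF U} {e a x : U} {f f' : U → ℝ}

theorem mem_Icc (hQ : Q.IsFor e) (hf : IsDFQuADEval Q f) (hx : x ∈ Q.X) : f x ∈ Icc 0 1 := by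
  refine hQ.1.induction (P := fun x => x ∈ Q.X → f x ∈ Icc 0 1) (fun x _ ih hx => ?_) hx hx
  have hatt : ∀ b ∈ Q.attackers x, f b ∈ Icc 0 1 := fun b hb =>
    ih b (Finset.mem_union_left _ (QBAF.mem_attackers.mp hb)) (hQ.mem_X_of_mem_attackers hb)
  have hsupp : ∀ b ∈ Q.supporters x, f b ∈ Icc 0 1 := fun b hb =>
    ih b (Finset.mem_union_right _ (QBAF.mem_supporters.mp hb)) (hQ.mem_X_of_mem_supporters hb)
  rw [hf x hx]
  exact dfComb_mem_Icc (hQ.2 x hx) (dfAgg_mem_Icc hatt) (dfAgg_mem_Icc hsupp)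

theorem le_of_not_hasOddPath_and_le_of_not_hasEvenPath (hQ : Q.IsFor e) (hQ' : Q'.IsFor e)
    (hsub : Q.Sub Q') (ha : a ∉ Q.X) (hedge : ∀ p ∈ Q'.edges, p ∉ Q.edges → p.1 = a ∨ p.2 = a)
    (hf : IsDFQuADEval Q f) (hf' : IsDFQuADEval Q' f') (hx : x ∈ Q.X) :
    (¬ Q'.toBAF.HasOddPath a x → f x ≤ f' x) ∧ (¬ Q'.toBAF.HasEvenPath a x → f' x ≤ f x) := by
  have hdisj := hQ'.1.disj
  refine hQ'.1.induction (P := fun x => x ∈ Q.X → (¬ Q'.toBAF.HasOddPath a x → f x ≤ f' x) ∧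
    (¬ Q'.toBAF.HasEvenPath a x → f' x ≤ f x)) (fun x _ ih hx => ?_) (hsub.1 hx) hx
  have hxa : x ≠ a := fun h => ha (h ▸ hx)
  have ihA := fun b (hb : b ∈ Q.attackers x) =>
    ih b (Finset.mem_union_left _ (hsub.2.1 (QBAF.mem_attackers.mp hb)))
      (hQ.mem_X_of_mem_attackers hb)
  have ihS := fun b (hb : b ∈ Q.supporters x) =>
    ih b (Finset.mem_union_right _ (hsub.2.2.1 (QBAF.mem_supporters.mp hb)))
      (hQ.mem_X_of_mem_supporters hb)
  have hnotAtt : ∀ {b}, b ∈ Q.supporters x → (b, x) ∉ Q'.Att := fun hb h =>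
    hdisj _ ⟨h, hsub.2.2.1 (QBAF.mem_supporters.mp hb)⟩
  have hbounds : ∀ b ∈ Q.X, f b ∈ Icc 0 1 := fun b hb => mem_Icc hQ hf hb
  have hbounds' : ∀ b ∈ Q'.X, f' b ∈ Icc 0 1 := fun b hb => mem_Icc hQ' hf' hb
  rw [hf x hx, hf' x (hsub.1 hx), hsub.2.2.2 x hx]
  constructor
  · intro hodd
    have hA := QBAF.attackers_subset_of_not_hasOddPath hsub hdisj hedge hxa hodd
    refine dfComb_dfAgg_mono (hQ.2 x hx) hA hsub.supporters_subset
      (fun b hb => hbounds b (hQ.mem_X_of_mem_attackers hb))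
      (fun b hb => hbounds' b (hQ'.mem_X_of_mem_supporters hb))
      (fun b hb => (ihA b (hA hb)).2 fun h => hodd (h.trans_att (QBAF.mem_attackers.mp hb)))
      (fun b hb => (ihS b hb).1 fun h => hodd (h.trans_supp
        (hsub.2.2.1 (QBAF.mem_supporters.mp hb)) (hnotAtt hb)))
  · intro heven
    have hS := QBAF.supporters_subset_of_not_hasEvenPath hsub hdisj hedge hxa heven
    refine dfComb_dfAgg_mono (hQ.2 x hx) hsub.attackers_subset hS
      (fun b hb => hbounds' b (hQ'.mem_X_of_mem_attackers hb))
      (fun b hb => hbounds b (hQ.mem_X_of_mem_supporters hb))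
      (fun b hb => (ihA b hb).1 fun h => heven (h.trans_att
        (hsub.2.1 (QBAF.mem_attackers.mp hb))))
      (fun b hb => (ihS b (hS hb)).2 fun h => heven (h.trans_supp
        (QBAF.mem_supporters.mp hb) (hnotAtt (hS hb))))

end IsDFQuADEval

/-- a newly added argument is pro if it increases the DF-QuAD evaluation
of `e`, and con if it decreases it. -/
theorem statement10 {U : Type u} [DecidableEq U] (e : U) (Q Q' : QBAF U)
    (hQ : Q.IsFor e) (hQ' : Q'.IsFor e) (hsub : Q.Sub Q')
    (a : U) (ha : a ∉ Q.X) (hX : Q'.X = insert a Q.X)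
    (hedge : ∀ p ∈ Q'.edges, p ∉ Q.edges → p.1 = a ∨ p.2 = a)
    (f f' : U → ℝ) (hf : IsDFQuADEval Q f) (hf' : IsDFQuADEval Q' f') :
    (f e < f' e → a ∈ Q'.toBAF.pro e) ∧ (f' e < f e → a ∈ Q'.toBAF.con e) := by
  obtain ⟨hle, hge⟩ := IsDFQuADEval.le_of_not_hasOddPath_and_le_of_not_hasEvenPath
    hQ hQ' hsub ha hedge hf hf' hQ.1.e_mem
  have haX : a ∈ Q'.X := hX ▸ Finset.mem_insert_self a Q.X
  refine ⟨fun hlt => ⟨haX, ?_⟩, fun hlt => ⟨haX, ?_⟩⟩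
  · by_contra h
    exact (hge h).not_gt hlt
  · by_contra h
    exact (hle h).not_gt hlt
end

section
/- Let Q = ⟨X,A,S,τ⟩ be a QBAF for an explanandum e such that 0 < τ(a) < 1 for every a ∈ X. Then under the DF-QuAD evaluation, 0 < σ(Q,a) < 1 for every a ∈ X. -/
universe u v

variable {U : Type u} {Ag : Type v}

lemma dfAgg_mem : ∀ (l : List ℝ), (∀ v ∈ l, 0 ≤ v ∧ v < 1) → 0 ≤ dfAgg l ∧ dfAgg l < 1
  | [], _ => by simp [dfAgg]
  | v :: vs, h => by
    have hv := h v List.mem_cons_self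
    have hvs := dfAgg_mem vs (fun x hx => h x (List.mem_cons_of_mem _ hx))
    simp only [dfAgg]
    constructor <;> nlinarith [hv.1, hv.2, hvs.1, hvs.2]

lemma dfComb_mem {v0 vm vp : ℝ} (h0 : 0 < v0) (h1 : v0 < 1)
    (hm : 0 ≤ vm ∧ vm < 1) (hp : 0 ≤ vp ∧ vp < 1) :
    0 < dfComb v0 vm vp ∧ dfComb v0 vm vp < 1 := by
  unfold dfComb
  split_ifs with h
  · rw [abs_of_nonpos (by linarith)]
    constructor <;> nlinarith [hm.1, hm.2, hp.1, hp.2]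
  · rw [abs_of_pos (by linarith [not_le.mp h])]
    constructor <;> nlinarith [hm.1, hm.2, hp.1, hp.2]

/-- if all base scores are strictly between 0 and 1, then so are all
DF-QuAD evaluations. -/
theorem statement13 {U : Type u} [DecidableEq U] (e : U) (Q : QBAF U) (hQ : Q.IsFor e)
    (hbs : ∀ a ∈ Q.X, 0 < Q.bs a ∧ Q.bs a < 1)
    (f : U → ℝ) (hf : IsDFQuADEval Q f) :
    ∀ a ∈ Q.X, 0 < f a ∧ f a < 1 := by
  classical
  obtain ⟨hB, -⟩ := hQ
  set r : U → U → Prop := fun b a => (b, a) ∈ Q.edges with hr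
  have hmem : ∀ p ∈ Q.edges, p.1 ∈ Q.X ∧ p.2 ∈ Q.X := by
    intro p hp
    rcases Finset.mem_union.mp hp with h | h
    · exact hB.att_mem p h
    · exact hB.supp_mem p h
  have path_of : ∀ {b a : U}, Relation.TransGen r b a → ∃ p, Q.toBAF.IsPath b a p := by
    intro b a h
    induction h using Relation.TransGen.head_induction_on with
    | single h => exact ⟨_, BAF.IsPath.single h⟩
    | head h _ ih => obtain ⟨p, hp⟩ := ih; exact ⟨_, BAF.IsPath.cons h hp⟩
  have irrefl : ∀ a : U, ¬ Relation.TransGen r a a := by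
    intro a h
    obtain ⟨p, hp⟩ := path_of h
    exact hB.acyclic a p hp
  have hacc : ∀ a : U, Acc r a := by
    have key : ∀ (n : ℕ) (a : U),
        (Q.X.filter (fun b => Relation.TransGen r b a)).card ≤ n → Acc r a := by
      intro n
      induction n with
      | zero =>
        intro a ha
        constructor
        intro b hb
        exfalso
        have hbX : b ∈ Q.X := (hmem _ hb).1
        have : b ∈ Q.X.filter (fun c => Relation.TransGen r c a) :=
          Finset.mem_filter.mpr ⟨hbX, Relation.TransGen.single hb⟩
        have := Finset.card_pos.mpr ⟨b, this⟩
        omega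
      | succ n ih =>
        intro a ha
        constructor
        intro b hb
        apply ih
        have hsub : Q.X.filter (fun c => Relation.TransGen r c b) ⊂
            Q.X.filter (fun c => Relation.TransGen r c a) := by
          constructor
          · intro c hc
            rw [Finset.mem_filter] at hc ⊢
            exact ⟨hc.1, hc.2.tail hb⟩
          · intro hcon
            have hbX : b ∈ Q.X := (hmem _ hb).1
            have : b ∈ Q.X.filter (fun c => Relation.TransGen r c a) :=
              Finset.mem_filter.mpr ⟨hbX, Relation.TransGen.single hb⟩
            have := (Finset.mem_filter.mp (hcon this)).2
            exact irrefl b this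
        have := Finset.card_lt_card hsub
        omega
    intro a
    exact key _ a le_rfl
  have main : ∀ a : U, a ∈ Q.X → 0 < f a ∧ f a < 1 := by
    intro a
    induction hacc a with
    | intro a _ ih =>
      intro ha
      rw [hf a ha]
      apply dfComb_mem (hbs a ha).1 (hbs a ha).2
      · apply dfAgg_mem
        intro v hv
        simp only [List.mem_map, Finset.mem_toList] at hv
        obtain ⟨b, hb, rfl⟩ := hv
        rw [QBAF.attackers, Finset.mem_image] at hb
        obtain ⟨p, hp, rfl⟩ := hb
        rw [Finset.mem_filter] at hp
        have hedge : (p.1, a) ∈ Q.edges := by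
          have : (p.1, p.2) ∈ Q.Att := by simpa using hp.1
          rw [hp.2] at this
          exact Finset.mem_union_left _ this
        have hb := ih p.1 hedge (hmem _ hedge).1
        exact ⟨le_of_lt hb.1, hb.2⟩
      · apply dfAgg_mem
        intro v hv
        simp only [List.mem_map, Finset.mem_toList] at hv
        obtain ⟨b, hb, rfl⟩ := hv
        rw [QBAF.supporters, Finset.mem_image] at hb
        obtain ⟨p, hp, rfl⟩ := hb
        rw [Finset.mem_filter] at hp
        have hedge : (p.1, a) ∈ Q.edges := by
          have : (p.1, p.2) ∈ Q.Supp := by simpa using hp.1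
          rw [hp.2] at this
          exact Finset.mem_union_right _ this
        have hb := ih p.1 hedge (hmem _ hedge).1
        exact ⟨le_of_lt hb.1, hb.2⟩
  exact main
end
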